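/- arXiv:1711.09193 — 5 statements merged into one kernel-verified Lean document; each statement's English description precedes it below -/
import Mathlib

section
/- Let w = Σ_{k=1}^K c_k v_k be a mixture density on ℝ, where each component density v_k has finite moments of all orders and admits an orthonormal polynomial basis {H_n^k} with three-term recurrence coefficients (a_n^k, b_n^k) and Jacobi matrices J_N^k ∈ ℝ^{(N+1)×(N+1)}, and where w itself admits an orthonormal polynomial basis with three-term recurrence coefficients (a_n, b_n). Fix N ∈ ℕ and define, for each k, vectors z_{−1}^k = 0, z_0^k = e₁ (the first standard basis vector of ℝ^{N+1}), and z_{n+1}^k = (J_N^k − a_n I) z_n^k − (b_n)² z_{n−1}^k; set ψ_n = Σ_{k=1}^K c_k (z_n^k)ᵀ z_n^k and φ_n = Σ_{k=1}^K c_k (z_n^k)ᵀ J_N^k z_n^k. Then b_n = √(ψ_n/ψ_{n−1}) for n = 1,…,N and a_n = φ_n/ψ_n for n = 0,…,N−1. -/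
/-
For p of degree at most N write ẑᵏ(p) = (⟨p, Hᵏ_i⟩_{vₖ})_{i ≤ N} for its coefficient vector in the
k-th orthonormal basis. Since ⟨X p, Hᵏ_i⟩ = ⟨p, X Hᵏ_i⟩ and X Hᵏ_i is given by the three-term
recurrence, Jᵏ_N ẑᵏ(p) = ẑᵏ(X p). So the recurrence defining zᵏ_n is the monic three-term recurrence
of w read through ẑᵏ, and zᵏ_n = ẑᵏ(π_n) for the monic orthogonal polynomials π_n = b₁⋯b_n H_n of w.
Parseval in each component then gives ψ_n = ∑ c_k ⟨π_n, π_n⟩_{vₖ} = ⟨π_n, π_n⟩_w = (b₁⋯b_n)² and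
likewise φ_n = ⟨π_n, X π_n⟩_w = a_n (b₁⋯b_n)².
-/

open MeasureTheory Polynomial Matrix

section Jacobi

variable {R : Type*} [CommRing R]

def jacobiMatrix (a b : ℕ → R) (N : ℕ) : Matrix (Fin (N + 1)) (Fin (N + 1)) R :=
  Matrix.of fun i j =>
    if (i : ℕ) = (j : ℕ) then a i
    else if (i : ℕ) + 1 = (j : ℕ) then b j
    else if (j : ℕ) + 1 = (i : ℕ) then b i
    else 0

lemma jacobiMatrix_mulVec_apply (a b : ℕ → R) {N : ℕ} (x : ℕ → R) (hx : x (N + 1) = 0)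
    (i : Fin (N + 1)) :
    (jacobiMatrix a b N *ᵥ fun j => x j) i
      = b (i + 1) * x (i + 1) + a i * x i + if (i : ℕ) = 0 then 0 else b i * x (i - 1) := by
  have hterm : ∀ j : ℕ, (if (i : ℕ) = j then a i else if (i : ℕ) + 1 = j then b j
      else if j + 1 = (i : ℕ) then b i else 0) * x j
      = (if j = i + 1 then b (i + 1) * x (i + 1) else 0) + (if j = i then a i * x i else 0)
        + if (i : ℕ) = 0 then 0 else if j = i - 1 then b i * x (i - 1) else 0 := by
    intro j
    split_ifs <;> first | omega | (subst_vars; ring)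
  rw [mulVec, dotProduct]
  simp only [jacobiMatrix, of_apply]
  rw [Fin.sum_univ_eq_sum_range (fun j => (if (i : ℕ) = j then a i
      else if (i : ℕ) + 1 = j then b j else if j + 1 = (i : ℕ) then b i else 0) * x j),
    Finset.sum_congr rfl fun j _ => hterm j]
  simp only [Finset.sum_add_distrib, Finset.sum_ite_eq', Finset.mem_range, Finset.sum_ite_irrel,
    Finset.sum_const_zero]
  have hi := i.isLt
  split_ifs <;> first | rfl | omega | (rw [show (i : ℕ) + 1 = N + 1 by omega, hx]; ring)

def ThreeTermRecurrence (a b : ℕ → R) (Q : ℕ → R[X]) : Prop :=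
  X * Q 0 = C (b 1) * Q 1 + C (a 0) * Q 0 ∧
    ∀ n, 1 ≤ n → X * Q n = C (b (n + 1)) * Q (n + 1) + C (a n) * Q n + C (b n) * Q (n - 1)

end Jacobi

section OrthonormalSystem

variable {K : Type*} [Field K]

noncomputable def orthoCoeffs (B : LinearMap.BilinForm K K[X]) (Q : ℕ → K[X]) (N : ℕ) :
    K[X] →ₗ[K] Fin (N + 1) → K :=
  LinearMap.pi fun i => B.flip (Q i)

@[simp]
lemma orthoCoeffs_apply (B : LinearMap.BilinForm K K[X]) (Q : ℕ → K[X]) (N : ℕ) (p : K[X])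
    (i : Fin (N + 1)) : orthoCoeffs B Q N p i = B p (Q i) :=
  rfl

variable {B : LinearMap.BilinForm K K[X]} {Q : ℕ → K[X]}

lemma orthoCoeffs_one (horth : ∀ m n, B (Q m) (Q n) = if m = n then 1 else 0) (h0 : Q 0 = 1)
    (N : ℕ) : orthoCoeffs B Q N 1 = Pi.single 0 1 := by
  ext i
  simp only [orthoCoeffs_apply, ← h0, horth, Pi.single_apply, Fin.ext_iff, Fin.val_zero, eq_comm]

variable (hdeg : ∀ n, (Q n).natDegree = n) (horth : ∀ m n, B (Q m) (Q n) = if m = n then 1 else 0)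
include hdeg horth

lemma sum_orthoCoeffs_smul {N : ℕ} {p : K[X]} (hp : p.natDegree ≤ N) :
    ∑ i, orthoCoeffs B Q N p i • Q i = p := by
  have hne : ∀ n, Q n ≠ 0 := fun n h => by simpa [h] using horth n n
  let S : Sequence K := ⟨Q, fun n => by rw [degree_eq_natDegree (hne n), hdeg]⟩
  have hspan := S.span_degreeLE (m := N) fun i _ => (leadingCoeff_ne_zero.mpr (hne i)).isUnit
  have hmem : p ∈ Submodule.span K (S '' Set.Iic N) := by
    rw [hspan, mem_degreeLE]; exact degree_le_of_natDegree_le hp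
  -- The expansion map fixes each `Q j`, `j ≤ N`, and these span the polynomials of degree `≤ N`.
  let E : K[X] →ₗ[K] K[X] := ∑ i : Fin (N + 1), (B.flip (Q i)).smulRight (Q i)
  suffices Submodule.span K (S '' Set.Iic N) ≤ LinearMap.eqLocus E LinearMap.id by
    simpa [E] using this hmem
  rw [Submodule.span_le]
  rintro _ ⟨j, hj, rfl⟩
  simp only [E, S, Set.mem_Iic] at hj ⊢
  simp [horth, Fin.sum_univ_eq_sum_range (fun i => if j = i then Q i else 0), hj]

lemma apply_eq_zero_of_natDegree_lt {p : K[X]} {m : ℕ} (hp : p.natDegree < m) :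
    B p (Q m) = 0 := by
  rw [← sum_orthoCoeffs_smul hdeg horth (le_refl p.natDegree)]
  simp only [orthoCoeffs_apply, map_sum, map_smul, LinearMap.coe_sum, LinearMap.coe_smul,
    Finset.sum_apply, Pi.smul_apply, horth, smul_eq_mul, mul_ite, mul_one, mul_zero]
  exact Finset.sum_eq_zero fun i _ => if_neg (by have := i.isLt; omega)

lemma orthoCoeffs_dotProduct (hB : B.IsSymm) {N : ℕ} {p : K[X]} (hp : p.natDegree ≤ N)
    (q : K[X]) :
    orthoCoeffs B Q N p ⬝ᵥ orthoCoeffs B Q N q = B p q := by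
  conv_rhs => rw [← sum_orthoCoeffs_smul hdeg horth hp]
  simp [dotProduct, hB.eq q]

lemma jacobiMatrix_mulVec_orthoCoeffs {a b : ℕ → K}
    (hX : ∀ p q, B (X * p) q = B p (X * q))
    (hrec : ThreeTermRecurrence a b Q)
    {N : ℕ} {p : K[X]} (hp : p.natDegree ≤ N) :
    jacobiMatrix a b N *ᵥ orthoCoeffs B Q N p = orthoCoeffs B Q N (X * p) := by
  ext i
  -- The term `b (N + 1) • Q (N + 1)` of `X * Q N` has no column in the matrix, but it is
  -- orthogonal to `p`.
  have hvanish : B p (Q (N + 1)) = 0 := apply_eq_zero_of_natDegree_lt hdeg horth (by omega)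
  rw [show orthoCoeffs B Q N p = fun j : Fin (N + 1) => B p (Q j) from rfl,
    jacobiMatrix_mulVec_apply a b (fun j => B p (Q j)) hvanish, orthoCoeffs_apply, hX]
  rcases Nat.eq_zero_or_pos (i : ℕ) with hi | hi
  · simp [hi, hrec.1, ← smul_eq_C_mul]
  · simp [hi.ne', hrec.2 _ hi, ← smul_eq_C_mul]

end OrthonormalSystem

section MonicOrthogonal

variable {K : Type*} [Field K]

noncomputable def monicOrtho (b : ℕ → K) (H : ℕ → K[X]) (n : ℕ) : K[X] :=
  (∏ j ∈ Finset.range n, b (j + 1)) • H n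

@[simp]
lemma monicOrtho_zero (b : ℕ → K) (H : ℕ → K[X]) : monicOrtho b H 0 = H 0 := by
  simp [monicOrtho]

variable {a b : ℕ → K} {H : ℕ → K[X]}

lemma monicOrtho_one (hrec : ThreeTermRecurrence a b H) :
    monicOrtho b H 1 = X * monicOrtho b H 0 - a 0 • monicOrtho b H 0 := by
  simp only [monicOrtho, Finset.prod_range_one, Finset.prod_range_zero, one_smul, smul_eq_C_mul]
  linear_combination -hrec.1

lemma monicOrtho_succ (hrec : ThreeTermRecurrence a b H) (n : ℕ) (hn : 1 ≤ n) :
    monicOrtho b H (n + 1)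
      = X * monicOrtho b H n - a n • monicOrtho b H n - b n ^ 2 • monicOrtho b H (n - 1) := by
  obtain ⟨m, rfl⟩ := Nat.exists_eq_add_of_le' hn
  simp only [monicOrtho, Finset.prod_range_succ, smul_eq_C_mul, Nat.add_sub_cancel, C_mul, C_pow]
  have h := hrec.2 (m + 1) hn
  rw [Nat.add_sub_cancel] at h
  linear_combination (-C (∏ j ∈ Finset.range m, b (j + 1)) * C (b (m + 1))) * h

lemma natDegree_monicOrtho_le (hdeg : ∀ n, (H n).natDegree = n) (n : ℕ) :
    (monicOrtho b H n).natDegree ≤ n :=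
  (natDegree_smul_le _ _).trans (hdeg n).le

lemma monicOrtho_apply_self {B : LinearMap.BilinForm K K[X]}
    (horth : ∀ m n, B (H m) (H n) = if m = n then 1 else 0) (n : ℕ) :
    B (monicOrtho b H n) (monicOrtho b H n) = (∏ j ∈ Finset.range n, b (j + 1)) ^ 2 := by
  simp [monicOrtho, horth, sq]

lemma monicOrtho_apply_X_mul {B : LinearMap.BilinForm K K[X]}
    (horth : ∀ m n, B (H m) (H n) = if m = n then 1 else 0)
    (hrec : ThreeTermRecurrence a b H) (n : ℕ) :
    B (monicOrtho b H n) (X * monicOrtho b H n)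
      = a n * (∏ j ∈ Finset.range n, b (j + 1)) ^ 2 := by
  have hdiag : B (H n) (X * H n) = a n := by
    rcases Nat.eq_zero_or_pos n with rfl | hn
    · simp [hrec.1, ← smul_eq_C_mul, horth]
    · simp [hrec.2 n hn, ← smul_eq_C_mul, horth, show n ≠ n - 1 by omega]
  rw [monicOrtho, mul_smul_comm, map_smul, map_smul, LinearMap.smul_apply, hdiag]
  simp only [smul_eq_mul]
  ring

lemma eq_map_of_jacobi_recurrence {N : ℕ} {J : Matrix (Fin (N + 1)) (Fin (N + 1)) K}
    {F : K[X] →ₗ[K] Fin (N + 1) → K} {P : ℕ → K[X]} {z : ℕ → Fin (N + 1) → K}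
    (hF : ∀ p : K[X], p.natDegree ≤ N → J *ᵥ F p = F (X * p))
    (hPdeg : ∀ n, (P n).natDegree ≤ n)
    (hP1 : P 1 = X * P 0 - a 0 • P 0)
    (hPrec : ∀ n, 1 ≤ n → P (n + 1) = X * P n - a n • P n - b n ^ 2 • P (n - 1))
    (hz0 : z 0 = F (P 0))
    (hz1 : z 1 = J *ᵥ z 0 - a 0 • z 0)
    (hzrec : ∀ n, 1 ≤ n → z (n + 1) = J *ᵥ z n - a n • z n - b n ^ 2 • z (n - 1)) :
    ∀ n ≤ N, z n = F (P n) := by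
  intro n
  induction n using Nat.strong_induction_on with
  | _ n ih =>
    intro hn
    match n with
    | 0 => exact hz0
    | 1 => rw [hz1, hz0, hF _ ((hPdeg 0).trans (by omega)), hP1, map_sub, map_smul]
    | m + 2 =>
      rw [hzrec (m + 1) (by omega), Nat.add_sub_cancel, ih (m + 1) (by omega) (by omega),
        ih m (by omega) (by omega), hF _ ((hPdeg _).trans (by omega)), hPrec (m + 1) (by omega),
        Nat.add_sub_cancel, map_sub, map_sub, map_smul, map_smul]

end MonicOrthogonal

section Moments

variable {v : ℝ → ℝ}

lemma integrable_pow_mul (hv : ∀ n : ℕ, Integrable fun x => |x| ^ n * v x) (n : ℕ) :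
    Integrable fun x => x ^ n * v x := by
  refine (hv n).mono ?_ (.of_forall fun x => by simp)
  exact (continuous_pow n).aestronglyMeasurable.mul (by simpa using (hv 0).aestronglyMeasurable)

lemma integrable_eval_mul (hv : ∀ n : ℕ, Integrable fun x => |x| ^ n * v x) (p : ℝ[X]) :
    Integrable fun x => p.eval x * v x := by
  simp_rw [eval_eq_sum_range, Finset.sum_mul, mul_assoc]
  exact integrable_finsetSum _ fun i _ => (integrable_pow_mul hv i).const_mul _

-- Defined through the moments `∫ xⁿ v` so that it is linear without any integrability assumption.
noncomputable def momentFunctional (v : ℝ → ℝ) : ℝ[X] →ₗ[ℝ] ℝ :=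
  lsum fun n => (∫ x, x ^ n * v x) • LinearMap.id

lemma momentFunctional_eq_integral (hv : ∀ n : ℕ, Integrable fun x => |x| ^ n * v x)
    (p : ℝ[X]) : momentFunctional v p = ∫ x, p.eval x * v x := by
  simp_rw [momentFunctional, lsum_apply, eval_eq_sum, Polynomial.sum, Finset.sum_mul]
  rw [integral_finsetSum _ fun i _ => by
    simpa [mul_assoc] using (integrable_pow_mul hv i).const_mul (p.coeff i)]
  refine Finset.sum_congr rfl fun i _ => ?_
  rw [LinearMap.smul_apply, LinearMap.id_apply, smul_eq_mul, mul_comm, ← integral_const_mul]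
  simp_rw [mul_assoc]

noncomputable def momentForm (v : ℝ → ℝ) : LinearMap.BilinForm ℝ ℝ[X] :=
  (LinearMap.mul ℝ ℝ[X]).compr₂ (momentFunctional v)

lemma momentForm_apply (p q : ℝ[X]) : momentForm v p q = momentFunctional v (p * q) :=
  rfl

lemma momentForm_isSymm : (momentForm v).IsSymm :=
  ⟨fun p q => by rw [momentForm_apply, momentForm_apply, mul_comm]⟩

lemma momentForm_X_mul (p q : ℝ[X]) : momentForm v (X * p) q = momentForm v p (X * q) := by
  rw [momentForm_apply, momentForm_apply, mul_left_comm, mul_assoc]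

lemma momentForm_eq_integral (hv : ∀ n : ℕ, Integrable fun x => |x| ^ n * v x) (p q : ℝ[X]) :
    momentForm v p q = ∫ x, p.eval x * q.eval x * v x := by
  simp_rw [momentForm_apply, momentFunctional_eq_integral hv, eval_mul]

lemma integrable_abs_pow_mul_finset_sum {ι : Type*} (s : Finset ι) (c : ι → ℝ)
    {v : ι → ℝ → ℝ} (hv : ∀ k (n : ℕ), Integrable fun x => |x| ^ n * v k x) (n : ℕ) :
    Integrable fun x => |x| ^ n * ∑ k ∈ s, c k * v k x := by
  simp_rw [Finset.mul_sum, mul_left_comm]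
  exact integrable_finsetSum _ fun k _ => (hv k n).const_mul _

lemma momentForm_finset_sum {ι : Type*} (s : Finset ι) (c : ι → ℝ) {v : ι → ℝ → ℝ}
    (hv : ∀ k (n : ℕ), Integrable fun x => |x| ^ n * v k x) (p q : ℝ[X]) :
    momentForm (fun x => ∑ k ∈ s, c k * v k x) p q
      = ∑ k ∈ s, c k * momentForm (v k) p q := by
  simp_rw [momentForm_eq_integral (integrable_abs_pow_mul_finset_sum s c hv),
    momentForm_eq_integral (hv _), ← integral_const_mul, Finset.mul_sum]
  rw [← integral_finsetSum _ fun k _ => ?_]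
  · simp_rw [mul_left_comm]
  · simpa [mul_left_comm] using (integrable_eval_mul (hv k) (p * q)).const_mul (c k)

lemma sum_orthoCoeffs_dotProduct_eq_momentForm {ι : Type*} (s : Finset ι) (c : ι → ℝ)
    {v : ι → ℝ → ℝ} (hv : ∀ k (n : ℕ), Integrable fun x => |x| ^ n * v k x) {Q : ι → ℕ → ℝ[X]}
    (hdeg : ∀ k n, (Q k n).natDegree = n)
    (horth : ∀ k m n, momentForm (v k) (Q k m) (Q k n) = if m = n then 1 else 0)
    {N : ℕ} {p : ℝ[X]} (hp : p.natDegree ≤ N) (q : ℝ[X]) :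
    ∑ k ∈ s, c k * (orthoCoeffs (momentForm (v k)) (Q k) N p ⬝ᵥ
      orthoCoeffs (momentForm (v k)) (Q k) N q)
      = momentForm (fun x => ∑ k ∈ s, c k * v k x) p q := by
  simp_rw [orthoCoeffs_dotProduct (hdeg _) (horth _) momentForm_isSymm hp,
    momentForm_finset_sum s c hv]

end Moments

theorem mixture_recurrence_coefficients_general
    (K N : ℕ)
    (c : Fin K → ℝ)
    (v : Fin K → ℝ → ℝ)
    (hv_mom : ∀ k (n : ℕ), Integrable (fun x : ℝ => |x| ^ n * v k x))
    (w : ℝ → ℝ) (hw : ∀ x, w x = ∑ k, c k * v k x)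
    -- orthonormal polynomial bases of the components, with their recurrences
    (Hk : Fin K → ℕ → Polynomial ℝ)
    (hHk0 : ∀ k, Hk k 0 = 1)
    (hHkdeg : ∀ k n, (Hk k n).natDegree = n)
    (hHkortho : ∀ k m n, ∫ x : ℝ, (Hk k m).eval x * (Hk k n).eval x * v k x
      = if m = n then 1 else 0)
    (ak bk : Fin K → ℕ → ℝ)
    (hHkrec0 : ∀ k, X * Hk k 0 = C (bk k 1) * Hk k 1 + C (ak k 0) * Hk k 0)
    (hHkrec : ∀ k n, 1 ≤ n → X * Hk k n
      = C (bk k (n + 1)) * Hk k (n + 1) + C (ak k n) * Hk k n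
        + C (bk k n) * Hk k (n - 1))
    -- the Jacobi matrices of the components
    (J : Fin K → Matrix (Fin (N + 1)) (Fin (N + 1)) ℝ)
    (hJ : ∀ k (i j : Fin (N + 1)), J k i j =
      if (i : ℕ) = (j : ℕ) then ak k i
      else if (i : ℕ) + 1 = (j : ℕ) then bk k j
      else if (j : ℕ) + 1 = (i : ℕ) then bk k i
      else 0)
    -- orthonormal polynomial basis of the mixture, with its recurrence
    (H : ℕ → Polynomial ℝ)
    (hH0 : H 0 = 1) (hHdeg : ∀ n, (H n).natDegree = n)
    (hHortho : ∀ m n, ∫ x : ℝ, (H m).eval x * (H n).eval x * w x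
      = if m = n then 1 else 0)
    (a b : ℕ → ℝ)
    (hHrec0 : X * H 0 = C (b 1) * H 1 + C (a 0) * H 0)
    (hHrec : ∀ n, 1 ≤ n → X * H n
      = C (b (n + 1)) * H (n + 1) + C (a n) * H n + C (b n) * H (n - 1))
    (hb_pos : ∀ n, 1 ≤ n → n ≤ N → 0 < b n)
    -- the z-vectors and the quantities ψ, φ
    (z : Fin K → ℕ → (Fin (N + 1) → ℝ))
    (hz0 : ∀ k, z k 0 = Pi.single 0 1)
    (hz1 : ∀ k, z k 1 = (J k).mulVec (z k 0) - a 0 • z k 0)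
    (hzrec : ∀ k n, 1 ≤ n → z k (n + 1)
      = (J k).mulVec (z k n) - a n • z k n - (b n) ^ 2 • z k (n - 1))
    (ψ φ : ℕ → ℝ)
    (hψ : ∀ n, ψ n = ∑ k, c k * (z k n ⬝ᵥ z k n))
    (hφ : ∀ n, φ n = ∑ k, c k * (z k n ⬝ᵥ (J k).mulVec (z k n))) :
    (∀ n, 1 ≤ n → n ≤ N → b n = Real.sqrt (ψ n / ψ (n - 1))) ∧
      (∀ n, n < N → a n = φ n / ψ n) := by
  obtain rfl : w = fun x => ∑ k, c k * v k x := funext hw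
  set F : Fin K → ℝ[X] →ₗ[ℝ] Fin (N + 1) → ℝ := fun k => orthoCoeffs (momentForm (v k)) (Hk k) N
  have horth_k : ∀ k m n, momentForm (v k) (Hk k m) (Hk k n) = if m = n then 1 else 0 :=
    fun k m n => by rw [momentForm_eq_integral (hv_mom k), hHkortho]
  have horth : ∀ m n,
      momentForm (fun x => ∑ k, c k * v k x) (H m) (H n) = if m = n then 1 else 0 := fun m n => by
    rw [momentForm_eq_integral (integrable_abs_pow_mul_finset_sum _ c hv_mom), hHortho]
  have hJF : ∀ k p, p.natDegree ≤ N → J k *ᵥ F k p = F k (X * p) := fun k p hp => by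
    rw [show J k = jacobiMatrix (ak k) (bk k) N from Matrix.ext (hJ k)]
    exact jacobiMatrix_mulVec_orthoCoeffs (hHkdeg k) (horth_k k) momentForm_X_mul
      ⟨hHkrec0 k, hHkrec k⟩ hp
  have hP : ∀ n ≤ N, (monicOrtho b H n).natDegree ≤ N := fun n hn =>
    (natDegree_monicOrtho_le hHdeg n).trans hn
  have hz : ∀ k, ∀ n ≤ N, z k n = F k (monicOrtho b H n) := fun k => by
    refine eq_map_of_jacobi_recurrence (hJF k) (natDegree_monicOrtho_le hHdeg)
      (monicOrtho_one ⟨hHrec0, hHrec⟩) (monicOrtho_succ ⟨hHrec0, hHrec⟩) ?_ (hz1 k) (hzrec k)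
    rw [hz0, monicOrtho_zero, hH0, orthoCoeffs_one (horth_k k) (hHk0 k)]
  have hψβ : ∀ n ≤ N, ψ n = (∏ j ∈ Finset.range n, b (j + 1)) ^ 2 := fun n hn => by
    simp_rw [hψ, hz _ n hn, F, sum_orthoCoeffs_dotProduct_eq_momentForm _ c hv_mom hHkdeg horth_k
      (hP n hn), monicOrtho_apply_self horth]
  have hφβ : ∀ n ≤ N, φ n = a n * (∏ j ∈ Finset.range n, b (j + 1)) ^ 2 := fun n hn => by
    simp_rw [hφ, hz _ n hn, hJF _ _ (hP n hn), F, sum_orthoCoeffs_dotProduct_eq_momentForm _ c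
      hv_mom hHkdeg horth_k (hP n hn), monicOrtho_apply_X_mul horth ⟨hHrec0, hHrec⟩]
  have hβ : ∀ n ≤ N, (∏ j ∈ Finset.range n, b (j + 1)) ^ 2 ≠ 0 := fun n hn =>
    pow_ne_zero 2 (Finset.prod_pos fun j hj => hb_pos (j + 1) (by omega) (by simp at hj; omega)).ne'
  constructor
  · intro n hn hnN
    obtain ⟨m, rfl⟩ := Nat.exists_eq_add_of_le' hn
    rw [hψβ _ hnN, hψβ _ (by omega), Nat.add_sub_cancel, Finset.prod_range_succ, mul_pow,
      mul_div_cancel_left₀ _ (hβ m (by omega)), Real.sqrt_sq (hb_pos _ hn hnN).le]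
  · intro n hn
    rw [hφβ n hn.le, hψβ n hn.le, mul_div_cancel_right₀ _ (hβ n hn.le)]

/-- Recurrence coefficients of the orthonormal polynomial basis of a
mixture density `w = ∑ c_k v_k` computed from the Jacobi matrices of the
components: with `z`-vectors defined by `z₋₁ = 0`, `z₀ = e₁`,
`z_{n+1} = (J^k − a_n I) z_n − b_n² z_{n−1}`, and
`ψ_n = ∑_k c_k z_nᵀ z_n`, `φ_n = ∑_k c_k z_nᵀ J^k z_n`, one has
`b_n = √(ψ_n/ψ_{n−1})` for `1 ≤ n ≤ N` and `a_n = φ_n/ψ_n` for `n < N`.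
(The orthonormal basis of the mixture is normalized so that `b_n > 0`.) -/
theorem mixture_recurrence_coefficients
    (K N : ℕ) (hK : 0 < K)
    (c : Fin K → ℝ) (hc_pos : ∀ k, 0 < c k) (hc_sum : ∑ k, c k = 1)
    (v : Fin K → ℝ → ℝ) (hv_meas : ∀ k, Measurable (v k))
    (hv_nonneg : ∀ k x, 0 ≤ v k x) (hv_prob : ∀ k, ∫ x : ℝ, v k x = 1)
    (hv_mom : ∀ k (n : ℕ), Integrable (fun x : ℝ => |x| ^ n * v k x))
    (w : ℝ → ℝ) (hw : ∀ x, w x = ∑ k, c k * v k x)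
    -- orthonormal polynomial bases of the components, with their recurrences
    (Hk : Fin K → ℕ → Polynomial ℝ)
    (hHk0 : ∀ k, Hk k 0 = 1)
    (hHkdeg : ∀ k n, (Hk k n).natDegree = n)
    (hHkortho : ∀ k m n, ∫ x : ℝ, (Hk k m).eval x * (Hk k n).eval x * v k x
      = if m = n then 1 else 0)
    (ak bk : Fin K → ℕ → ℝ)
    (hHkrec0 : ∀ k, X * Hk k 0 = C (bk k 1) * Hk k 1 + C (ak k 0) * Hk k 0)
    (hHkrec : ∀ k n, 1 ≤ n → X * Hk k n
      = C (bk k (n + 1)) * Hk k (n + 1) + C (ak k n) * Hk k n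
        + C (bk k n) * Hk k (n - 1))
    -- the Jacobi matrices of the components
    (J : Fin K → Matrix (Fin (N + 1)) (Fin (N + 1)) ℝ)
    (hJ : ∀ k (i j : Fin (N + 1)), J k i j =
      if (i : ℕ) = (j : ℕ) then ak k i
      else if (i : ℕ) + 1 = (j : ℕ) then bk k j
      else if (j : ℕ) + 1 = (i : ℕ) then bk k i
      else 0)
    -- orthonormal polynomial basis of the mixture, with its recurrence
    (H : ℕ → Polynomial ℝ)
    (hH0 : H 0 = 1) (hHdeg : ∀ n, (H n).natDegree = n)
    (hHortho : ∀ m n, ∫ x : ℝ, (H m).eval x * (H n).eval x * w x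
      = if m = n then 1 else 0)
    (a b : ℕ → ℝ)
    (hHrec0 : X * H 0 = C (b 1) * H 1 + C (a 0) * H 0)
    (hHrec : ∀ n, 1 ≤ n → X * H n
      = C (b (n + 1)) * H (n + 1) + C (a n) * H n + C (b n) * H (n - 1))
    (hb_pos : ∀ n, 1 ≤ n → n ≤ N → 0 < b n)
    -- the z-vectors and the quantities ψ, φ
    (z : Fin K → ℕ → (Fin (N + 1) → ℝ))
    (hz0 : ∀ k, z k 0 = Pi.single 0 1)
    (hz1 : ∀ k, z k 1 = (J k).mulVec (z k 0) - a 0 • z k 0)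
    (hzrec : ∀ k n, 1 ≤ n → z k (n + 1)
      = (J k).mulVec (z k n) - a n • z k n - (b n) ^ 2 • z k (n - 1))
    (ψ φ : ℕ → ℝ)
    (hψ : ∀ n, ψ n = ∑ k, c k * (z k n ⬝ᵥ z k n))
    (hφ : ∀ n, φ n = ∑ k, c k * (z k n ⬝ᵥ (J k).mulVec (z k n))) :
    (∀ n, 1 ≤ n → n ≤ N → b n = Real.sqrt (ψ n / ψ (n - 1))) ∧
      (∀ n, n < N → a n = φ n / ψ n) :=
  mixture_recurrence_coefficients_general K N c v hv_mom w hw Hk hHk0 hHkdeg hHkortho ak bk hHkrec0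
    hHkrec J hJ H hH0 hHdeg hHortho a b hHrec0 hHrec hb_pos z hz0 hz1 hzrec ψ φ hψ hφ
end

section
/- Let w = Σ_{k=1}^K c_k v_k be a mixture density, with orthonormal polynomial basis {H_n} for w and orthonormal polynomial bases {H_n^k} for each component v_k. For a fixed N, write H_N(x) = Σ_{n=0}^N q_{N,n}^k H_n^k(x) for each k (which is possible since both families span the polynomials of degree at most N). Then for every function f with ∫_ℝ |f(x) H_N(x)| v_k(x) dx < ∞ for all k, the payoff coefficient f_N = ⟨f, H_N⟩_w satisfies f_N = Σ_{k=1}^K Σ_{n=0}^N c_k q_{N,n}^k f_n^k, where f_n^k = ⟨f, H_n^k⟩_{v_k}. -/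
open MeasureTheory Polynomial

/-! Both expansions are finite linear combinations: substituting `w = ∑ c_k v_k`, and then
`H_N = ∑ q_{N,n}^k H_n^k` inside each integral against `v_k`, linearity of the integral gives
the formula. -/

section

variable {α ι : Type*} [MeasurableSpace α] {μ : Measure α}

theorem integral_finset_sum_const_mul (s : Finset ι) (a : ι → ℝ) {F : ι → α → ℝ}
    (hF : ∀ i ∈ s, Integrable (F i) μ) :
    ∫ x, ∑ i ∈ s, a i * F i x ∂μ = ∑ i ∈ s, a i * ∫ x, F i x ∂μ := by
  rw [integral_finsetSum s fun i hi => (hF i hi).const_mul (a i)]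
  simp only [integral_const_mul]

theorem integral_mul_mixture [Fintype ι] (g : α → ℝ) (c : ι → ℝ) (v : ι → α → ℝ)
    {w : α → ℝ} (hw : ∀ x, w x = ∑ k, c k * v k x)
    (hint : ∀ k, Integrable (fun x => g x * v k x) μ) :
    ∫ x, g x * w x ∂μ = ∑ k, c k * ∫ x, g x * v k x ∂μ := by
  rw [← integral_finset_sum_const_mul _ c fun k _ => hint k]
  congr 1 with x
  rw [hw x, Finset.mul_sum]
  exact Finset.sum_congr rfl fun k _ => mul_left_comm _ _ _

theorem integral_mul_eval_finset_sum_C_mul {ν : Measure ℝ} (f v : ℝ → ℝ) (s : Finset ι)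
    (a : ι → ℝ) (P : ι → ℝ[X])
    (hint : ∀ i ∈ s, Integrable (fun x => f x * (P i).eval x * v x) ν) :
    ∫ x, f x * (∑ i ∈ s, C (a i) * P i).eval x * v x ∂ν
      = ∑ i ∈ s, a i * ∫ x, f x * (P i).eval x * v x ∂ν := by
  rw [← integral_finset_sum_const_mul s a hint]
  congr 1 with x
  simp only [eval_finsetSum, eval_mul, eval_C, Finset.mul_sum, Finset.sum_mul]
  exact Finset.sum_congr rfl fun i _ => by ring

end

theorem mixture_payoff_coefficients_general
    (K N : ℕ)
    (c : Fin K → ℝ)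
    (v : Fin K → ℝ → ℝ)
    (w : ℝ → ℝ) (hw : ∀ x, w x = ∑ k, c k * v k x)
    -- orthonormal polynomial bases of the components
    (Hk : Fin K → ℕ → Polynomial ℝ)
    -- orthonormal polynomial basis of the mixture
    (H : ℕ → Polynomial ℝ)
    -- the representation of `H N` in each component basis
    (q : Fin K → ℕ → ℝ)
    (hq : ∀ k, H N = ∑ n ∈ Finset.range (N + 1), C (q k n) * Hk k n)
    -- the payoff function
    (f : ℝ → ℝ)
    (hfint : ∀ k, Integrable (fun x => f x * (H N).eval x * v k x))
    (hfintk : ∀ k n, n ≤ N → Integrable (fun x => f x * (Hk k n).eval x * v k x)) :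
    (∫ x : ℝ, f x * (H N).eval x * w x)
      = ∑ k, ∑ n ∈ Finset.range (N + 1),
          c k * q k n * ∫ x : ℝ, f x * (Hk k n).eval x * v k x := by
  calc (∫ x : ℝ, f x * (H N).eval x * w x)
      = ∑ k, c k * ∫ x : ℝ, f x * (H N).eval x * v k x :=
        integral_mul_mixture (fun x => f x * (H N).eval x) c v hw hfint
    _ = ∑ k, c k * ∑ n ∈ Finset.range (N + 1),
          q k n * ∫ x : ℝ, f x * (Hk k n).eval x * v k x := by
        refine Finset.sum_congr rfl fun k _ => ?_
        rw [hq k, integral_mul_eval_finset_sum_C_mul _ _ _ _ _ fun n hn =>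
          hfintk k n (Finset.mem_range_succ_iff.mp hn)]
    _ = _ := by simp only [Finset.mul_sum, mul_assoc]

/-- For a mixture density `w = ∑ c_k v_k` with orthonormal
polynomial basis `{H n}` and component bases `{H_n^k}`, writing
`H_N = ∑_{n=0}^N q_{N,n}^k H_n^k`, the payoff coefficient
`f_N = ⟨f, H_N⟩_w` satisfies `f_N = ∑_k ∑_{n=0}^N c_k q_{N,n}^k f_n^k`,
where `f_n^k = ⟨f, H_n^k⟩_{v_k}` (all the inner products being well defined). -/
theorem mixture_payoff_coefficients
    (K N : ℕ) (hK : 0 < K)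
    (c : Fin K → ℝ) (hc_pos : ∀ k, 0 < c k) (hc_sum : ∑ k, c k = 1)
    (v : Fin K → ℝ → ℝ) (hv_meas : ∀ k, Measurable (v k))
    (hv_nonneg : ∀ k x, 0 ≤ v k x) (hv_prob : ∀ k, ∫ x : ℝ, v k x = 1)
    (hv_mom : ∀ k (n : ℕ), Integrable (fun x : ℝ => |x| ^ n * v k x))
    (w : ℝ → ℝ) (hw : ∀ x, w x = ∑ k, c k * v k x)
    -- orthonormal polynomial bases of the components
    (Hk : Fin K → ℕ → Polynomial ℝ)
    (hHk0 : ∀ k, Hk k 0 = 1)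
    (hHkdeg : ∀ k n, (Hk k n).natDegree = n)
    (hHkortho : ∀ k m n, ∫ x : ℝ, (Hk k m).eval x * (Hk k n).eval x * v k x
      = if m = n then 1 else 0)
    -- orthonormal polynomial basis of the mixture
    (H : ℕ → Polynomial ℝ)
    (hH0 : H 0 = 1) (hHdeg : ∀ n, (H n).natDegree = n)
    (hHortho : ∀ m n, ∫ x : ℝ, (H m).eval x * (H n).eval x * w x
      = if m = n then 1 else 0)
    -- the representation of `H N` in each component basis
    (q : Fin K → ℕ → ℝ)
    (hq : ∀ k, H N = ∑ n ∈ Finset.range (N + 1), C (q k n) * Hk k n)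
    -- the payoff function
    (f : ℝ → ℝ)
    (hfint : ∀ k, Integrable (fun x => f x * (H N).eval x * v k x))
    (hfintk : ∀ k n, n ≤ N → Integrable (fun x => f x * (Hk k n).eval x * v k x)) :
    (∫ x : ℝ, f x * (H N).eval x * w x)
      = ∑ k, ∑ n ∈ Finset.range (N + 1),
          c k * q k n * ∫ x : ℝ, f x * (Hk k n).eval x * v k x :=
  mixture_payoff_coefficients_general K N c v w hw Hk H q hq f hfint hfintk
end

section
/- Let v be the Gamma density on (ξ,∞) with shape α ≥ 1 and rate β > 1, and let H_n(x) = √(n!/Γ(α+n)) · L_n^{α−1}(β(x−ξ)) be its orthonormal polynomial basis, where L_n^{α−1} are the generalized Laguerre polynomials. Let f(x) = e^{−rT}(e^x − e^{k̄})^+ be the discounted payoff of a call option with log strike k̄ ∈ ℝ, interest rate r ∈ ℝ and maturity T > 0. Then the payoff coefficients f_n = ∫_ℝ f(x) H_n(x) v(x) dx are given by f_n = e^{−rT} √(n!/Γ(α+n)) · (1/Γ(α)) · ( e^{ξ} I_n^{α−1}(μ; β^{−1}) − e^{k̄} I_n^{α−1}(μ; 0) ), where μ = max(0, β(k̄ −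 ξ)) and I_n^{α−1}(μ;ν) = ∫_μ^∞ e^{νx} L_n^{α−1}(x) x^{α−1} e^{−x} dx. -/
open MeasureTheory Set Polynomial

/-- The generalized Laguerre polynomials `L_n^{(a)}`:
`L_0^{(a)} = 1`, `L_1^{(a)} = 1 + a − X`, and
`(n+1) L_{n+1}^{(a)} = (2n + 1 + a − X) L_n^{(a)} − (n + a) L_{n−1}^{(a)}`;
in particular `L_1^{(α−1)} = α − X`. -/
noncomputable def genLaguerre (a : ℝ) : ℕ → Polynomial ℝ
  | 0 => 1
  | 1 => C (1 + a) - X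
  | n + 2 => (((n : ℝ) + 2)⁻¹) •
      ((C (2 * ((n : ℝ) + 1) + 1 + a) - X) * genLaguerre a (n + 1)
        - C (((n : ℝ) + 1) + a) * genLaguerre a n)

/-!
The substitution `u = β (x − ξ)` turns `v(x) dx` into `u^{α−1} e^{−u} du / Γ(α)` and `e^x`
into `e^ξ e^{u/β}`. The call payoff vanishes exactly for `x ≤ k̄`, so together with the
support `x > ξ` of the density the integral lives on `u > max(0, β(k̄ − ξ)) = μ`; there the payoff
is `e^ξ e^{u/β} − e^{k̄}`, which splits the integral into `e^ξ I_n(μ; β⁻¹) − e^{k̄} I_n(μ; 0)`.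
Both pieces converge because `e^{νu} e^{−u}` still decays exponentially for `ν < 1`.
-/

theorem integrableOn_Ioi_eval_mul_rpow_mul_exp_neg_mul (p : ℝ[X]) {s c : ℝ} (hs : -1 < s)
    (hc : 0 < c) :
    IntegrableOn (fun x ↦ p.eval x * x ^ s * Real.exp (-(c * x))) (Ioi 0) := by
  induction p using Polynomial.induction_on' with
  | add p q hp hq =>
    refine (hp.add hq).congr_fun (fun x _ ↦ ?_) measurableSet_Ioi
    simp only [Pi.add_apply, eval_add, add_mul]
  | monomial k a =>
    have hsk : -1 < s + k := by linarith [(Nat.cast_nonneg k : (0 : ℝ) ≤ k)]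
    refine IntegrableOn.congr_fun
      ((integrableOn_rpow_mul_exp_neg_mul_rpow hsk one_pos hc).const_mul a)
      (fun x (hx : 0 < x) ↦ ?_) measurableSet_Ioi
    simp only [eval_monomial, Real.rpow_one, Real.rpow_add hx, Real.rpow_natCast, neg_mul]
    ring

noncomputable def tiltedGammaIntegrand (p : ℝ[X]) (s ν u : ℝ) : ℝ :=
  Real.exp (ν * u) * p.eval u * u ^ s * Real.exp (-u)

theorem integrableOn_Ioi_tiltedGammaIntegrand (p : ℝ[X]) {s ν μ : ℝ}
    (hs : -1 < s) (hν : ν < 1) (hμ : 0 ≤ μ) :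
    IntegrableOn (tiltedGammaIntegrand p s ν) (Ioi μ) := by
  refine ((integrableOn_Ioi_eval_mul_rpow_mul_exp_neg_mul p hs (sub_pos.2 hν)).mono_set
    (Ioi_subset_Ioi hμ)).congr_fun (fun x _ ↦ ?_) measurableSet_Ioi
  simp only [tiltedGammaIntegrand, show -((1 - ν) * x) = ν * x + -x by ring, Real.exp_add]
  ring

theorem integral_indicator_comp_mul_sub {s : Set ℝ} (hs : MeasurableSet s) (g : ℝ → ℝ)
    {β : ℝ} (hβ : 0 < β) (ξ : ℝ) :
    ∫ x, s.indicator g (β * (x - ξ)) = β⁻¹ * ∫ u in s, g u := by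
  rw [integral_sub_right_eq_self (fun y ↦ s.indicator g (β * y)) ξ,
    Measure.integral_comp_mul_left (s.indicator g) β, integral_indicator hs,
    abs_of_pos (inv_pos.2 hβ), smul_eq_mul]

theorem max_zero_mul_sub_lt_mul_sub_iff {β : ℝ} (hβ : 0 < β) (k ξ x : ℝ) :
    max 0 (β * (k - ξ)) < β * (x - ξ) ↔ ξ < x ∧ k < x := by
  rw [max_lt_iff, mul_lt_mul_iff_right₀ hβ, mul_pos_iff_of_pos_left hβ, sub_pos,
    sub_lt_sub_iff_right]

theorem rpow_mul_rpow_sub_one_eq_mul_mul_rpow {β y : ℝ} (hβ : 0 < β) (hy : 0 ≤ y) (α : ℝ) :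
    β ^ α * y ^ (α - 1) = β * (β * y) ^ (α - 1) := by
  rw [Real.mul_rpow hβ.le hy, Real.rpow_sub_one hβ.ne']
  field_simp

theorem exp_sub_exp_mul_eval_mul_gammaDensity_eq (p : ℝ[X]) {α β ξ x : ℝ} (hβ : 0 < β)
    (hx : ξ < x) (k c : ℝ) :
    (Real.exp x - Real.exp k) * (c * p.eval (β * (x - ξ))) *
        (β ^ α / Real.Gamma α * (x - ξ) ^ (α - 1) * Real.exp (-(β * (x - ξ))))
      = c * (β / Real.Gamma α) * (Real.exp ξ * tiltedGammaIntegrand p (α - 1) β⁻¹ (β * (x - ξ))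
        - Real.exp k * tiltedGammaIntegrand p (α - 1) 0 (β * (x - ξ))) := by
  rw [← mul_div_right_comm, rpow_mul_rpow_sub_one_eq_mul_mul_rpow hβ (sub_pos.2 hx).le]
  simp only [tiltedGammaIntegrand, inv_mul_cancel_left₀ hβ.ne', Real.exp_sub, zero_mul,
    Real.exp_zero]
  field_simp

theorem gamma_call_payoff_coefficients_general
    (α β ξ r T kbar : ℝ) (hα : 1 ≤ α) (hβ : 1 < β)
    (v : ℝ → ℝ)
    (hv : ∀ x, v x = if ξ < x then
      β ^ α / Real.Gamma α * (x - ξ) ^ (α - 1) * Real.exp (-(β * (x - ξ)))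
      else 0)
    (H : ℕ → ℝ → ℝ)
    (hH : ∀ n x, H n x = Real.sqrt ((n.factorial : ℝ) / Real.Gamma (α + n))
      * (genLaguerre (α - 1) n).eval (β * (x - ξ)))
    (f : ℝ → ℝ)
    (hf : ∀ x, f x = Real.exp (-(r * T)) * max (Real.exp x - Real.exp kbar) 0)
    (μ : ℝ) (hμ : μ = max 0 (β * (kbar - ξ)))
    (I : ℕ → ℝ → ℝ)
    (hI : ∀ (n : ℕ) (ν : ℝ), I n ν
      = ∫ x in Ioi μ, Real.exp (ν * x) * (genLaguerre (α - 1) n).eval x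
          * x ^ (α - 1) * Real.exp (-x)) :
    ∀ n : ℕ,
      (∫ x : ℝ, f x * H n x * v x)
        = Real.exp (-(r * T)) * Real.sqrt ((n.factorial : ℝ) / Real.Gamma (α + n))
          * (1 / Real.Gamma α)
          * (Real.exp ξ * I n β⁻¹ - Real.exp kbar * I n 0) := by
  intro n
  have hβ0 : 0 < β := one_pos.trans hβ
  set c := Real.sqrt ((n.factorial : ℝ) / Real.Gamma (α + n))
  set F := tiltedGammaIntegrand (genLaguerre (α - 1) n) (α - 1)
  have hpayoff : ∀ x, f x * H n x * v x = Real.exp (-(r * T)) * c * (β / Real.Gamma α) *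
      (Ioi μ).indicator (fun u ↦ Real.exp ξ * F β⁻¹ u - Real.exp kbar * F 0 u) (β * (x - ξ)) := by
    intro x
    have hsupp : μ < β * (x - ξ) ↔ ξ < x ∧ kbar < x :=
      hμ ▸ max_zero_mul_sub_lt_mul_sub_iff hβ0 kbar ξ x
    by_cases hx : ξ < x ∧ kbar < x
    · rw [indicator_of_mem (s := Ioi μ) (hsupp.2 hx), hf, hH, hv, if_pos hx.1,
        max_eq_left (sub_nonneg.2 (Real.exp_le_exp.2 hx.2.le))]
      linear_combination Real.exp (-(r * T)) *
        exp_sub_exp_mul_eval_mul_gammaDensity_eq (genLaguerre (α - 1) n) hβ0 hx.1 kbar c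
    · rw [indicator_of_notMem (s := Ioi μ) (mt hsupp.1 hx), mul_zero]
      rcases not_and_or.1 hx with hξ | hk
      · rw [hv, if_neg hξ, mul_zero]
      · rw [hf, max_eq_right (sub_nonpos.2 (Real.exp_le_exp.2 (not_lt.1 hk))), mul_zero,
          zero_mul, zero_mul]
  have hsplit : ∫ u in Ioi μ, (Real.exp ξ * F β⁻¹ u - Real.exp kbar * F 0 u)
      = Real.exp ξ * I n β⁻¹ - Real.exp kbar * I n 0 := by
    have hs : -1 < α - 1 := by linarith
    have hμ0 : 0 ≤ μ := hμ ▸ le_max_left _ _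
    rw [integral_sub, integral_const_mul, integral_const_mul, hI, hI]
    · rfl
    · exact (integrableOn_Ioi_tiltedGammaIntegrand _ hs (inv_lt_one_of_one_lt₀ hβ) hμ0).const_mul _
    · exact (integrableOn_Ioi_tiltedGammaIntegrand _ hs one_pos hμ0).const_mul _
  rw [integral_congr_ae (Filter.Eventually.of_forall hpayoff), integral_const_mul,
    integral_indicator_comp_mul_sub measurableSet_Ioi _ hβ0, hsplit]
  field_simp

/-- Payoff coefficients of a call option
`f(x) = e^{−rT}(e^x − e^{k̄})⁺` under the Gamma density on `(ξ,∞)` with shape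
`α ≥ 1` and rate `β > 1`, with orthonormal basis
`H_n(x) = √(n!/Γ(α+n)) L_n^{α−1}(β(x−ξ))`:
`f_n = e^{−rT} √(n!/Γ(α+n)) (1/Γ(α)) (e^{ξ} I_n^{α−1}(μ;β⁻¹) − e^{k̄} I_n^{α−1}(μ;0))`
with `μ = max(0, β(k̄−ξ))`. -/
theorem gamma_call_payoff_coefficients
    (α β ξ r T kbar : ℝ) (hα : 1 ≤ α) (hβ : 1 < β) (hT : 0 < T)
    (v : ℝ → ℝ)
    (hv : ∀ x, v x = if ξ < x then
      β ^ α / Real.Gamma α * (x - ξ) ^ (α - 1) * Real.exp (-(β * (x - ξ)))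
      else 0)
    (H : ℕ → ℝ → ℝ)
    (hH : ∀ n x, H n x = Real.sqrt ((n.factorial : ℝ) / Real.Gamma (α + n))
      * (genLaguerre (α - 1) n).eval (β * (x - ξ)))
    (f : ℝ → ℝ)
    (hf : ∀ x, f x = Real.exp (-(r * T)) * max (Real.exp x - Real.exp kbar) 0)
    (μ : ℝ) (hμ : μ = max 0 (β * (kbar - ξ)))
    (I : ℕ → ℝ → ℝ)
    (hI : ∀ (n : ℕ) (ν : ℝ), I n ν
      = ∫ x in Ioi μ, Real.exp (ν * x) * (genLaguerre (α - 1) n).eval x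
          * x ^ (α - 1) * Real.exp (-x)) :
    ∀ n : ℕ,
      (∫ x : ℝ, f x * H n x * v x)
        = Real.exp (-(r * T)) * Real.sqrt ((n.factorial : ℝ) / Real.Gamma (α + n))
          * (1 / Real.Gamma α)
          * (Real.exp ξ * I n β⁻¹ - Real.exp kbar * I n 0) :=
  gamma_call_payoff_coefficients_general α β ξ r T kbar hα hβ v hv H hH f hf μ hμ I hI
end

section
/- Let v be the Gamma density on (ξ,∞) with shape α ≥ 1 and rate β > 0, with orthonormal polynomial basis H_n(x) = √(n!/Γ(α+n)) · L_n^{α−1}(β(x−ξ)). Let f(x) = e^{−rT}(x − k̄)^+ for a strike k̄ ≥ ξ, interest rate r ∈ ℝ and maturity T > 0. Write x·H_n(x+ξ) + (ξ − k̄)·H_n(x+ξ) = Σ_{j=0}^{n+1} p_{n,1+j} x^j (expansion in the monomial basis). Then the payoff coefficients f_n = ∫_ℝ f(x) H_n(x) v(x) dx satisfy f_n = e^{−rT} Σ_{j=0}^{n+1} p_{n,1+j} · Γ(α+j, β(k̄−ξ)) / (Γ(α) β^{j}) for every n ≥ 0. -/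
/-
The payoff vanishes below the strike, and above it `(x - k̄) H_n(x) = ∑ⱼ p_{n,1+j} (x - ξ)^j`
by the defining identity of `p` at `x - ξ`. So `f_n` is a combination of the tail moments
`∫_{k̄}^∞ (x - ξ)^j v(x) dx`, and the substitution `u = β (x - ξ)` turns each of these into
`Γ(α + j, β (k̄ - ξ)) / (Γ(α) β^j)`.
-/

open MeasureTheory Set Polynomial

noncomputable def gammaDensity (α β ξ x : ℝ) : ℝ :=
  if ξ < x then β ^ α / Real.Gamma α * (x - ξ) ^ (α - 1) * Real.exp (-(β * (x - ξ))) else 0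

section ShiftedScaledIoi

variable {E : Type*} [NormedAddCommGroup E]

theorem integral_Ioi_comp_sub_right [NormedSpace ℝ E] (g : ℝ → E) (a d : ℝ) :
    ∫ x in Ioi a, g (x - d) = ∫ y in Ioi (a - d), g y := by
  have h := (measurePreserving_sub_right volume d).setIntegral_preimage_emb
    (MeasurableEquiv.subRight d).measurableEmbedding g (Ioi (a - d))
  simpa [preimage_sub_const_Ioi] using h

theorem integrableOn_Ioi_comp_sub_right_iff (g : ℝ → E) (a d : ℝ) :
    IntegrableOn (fun x => g (x - d)) (Ioi a) ↔ IntegrableOn g (Ioi (a - d)) := by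
  have h := (measurePreserving_sub_right volume d).integrableOn_comp_preimage
    (MeasurableEquiv.subRight d).measurableEmbedding (f := g) (s := Ioi (a - d))
  simpa [preimage_sub_const_Ioi, Function.comp_def] using h

theorem integral_Ioi_comp_mul_sub [NormedSpace ℝ E] (g : ℝ → E) (a ξ : ℝ) {b : ℝ}
    (hb : 0 < b) :
    ∫ x in Ioi a, g (b * (x - ξ)) = b⁻¹ • ∫ u in Ioi (b * (a - ξ)), g u := by
  rw [integral_Ioi_comp_sub_right (fun y => g (b * y)), integral_comp_mul_left_Ioi g _ hb]

theorem integrableOn_Ioi_comp_mul_sub_iff (g : ℝ → E) (a ξ : ℝ) {b : ℝ} (hb : 0 < b) :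
    IntegrableOn (fun x => g (b * (x - ξ))) (Ioi a) ↔ IntegrableOn g (Ioi (b * (a - ξ))) := by
  rw [integrableOn_Ioi_comp_sub_right_iff (fun y => g (b * y)),
    integrableOn_Ioi_comp_mul_left_iff g _ hb]

end ShiftedScaledIoi

theorem integral_max_sub_zero_mul (g : ℝ → ℝ) (k : ℝ) :
    ∫ x, max (x - k) 0 * g x = ∫ x in Ioi k, (x - k) * g x := by
  rw [← integral_indicator measurableSet_Ioi]
  congr 1 with x
  obtain hx | hx := lt_or_ge k x
  · rw [indicator_of_mem (mem_Ioi.mpr hx), max_eq_left (sub_nonneg.mpr hx.le)]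
  · rw [indicator_of_notMem (notMem_Ioi.mpr hx), max_eq_right (sub_nonpos.mpr hx), zero_mul]

section GammaDensity

variable {α β ξ : ℝ}

theorem pow_mul_gammaDensity_of_lt (hβ : 0 < β) {x : ℝ} (hx : ξ < x) (j : ℕ) :
    (x - ξ) ^ j * gammaDensity α β ξ x
      = (Real.Gamma α * β ^ j)⁻¹ * β *
          ((β * (x - ξ)) ^ (α + j - 1) * Real.exp (-(β * (x - ξ)))) := by
  have hxξ : 0 < x - ξ := sub_pos.mpr hx
  have hpow : (β * (x - ξ)) ^ (α + j - 1) = β ^ α * β ^ (j : ℝ) / β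
      * ((x - ξ) ^ (j : ℝ) * (x - ξ) ^ (α - 1)) := by
    rw [Real.mul_rpow hβ.le hxξ.le, ← Real.rpow_add hβ, ← Real.rpow_sub_one hβ.ne',
      ← Real.rpow_add hxξ]
    ring_nf
  rw [gammaDensity, if_pos hx, hpow, Real.rpow_natCast, Real.rpow_natCast]
  field_simp

theorem integral_Ioi_pow_mul_gammaDensity (hβ : 0 < β) {k : ℝ} (hk : ξ ≤ k) (j : ℕ) :
    ∫ x in Ioi k, (x - ξ) ^ j * gammaDensity α β ξ x
      = (∫ u in Ioi (β * (k - ξ)), u ^ (α + j - 1) * Real.exp (-u))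
          / (Real.Gamma α * β ^ j) := by
  rw [setIntegral_congr_fun measurableSet_Ioi
      fun x hx => pow_mul_gammaDensity_of_lt hβ (hk.trans_lt hx) j,
    integral_const_mul,
    integral_Ioi_comp_mul_sub (fun u => u ^ (α + j - 1) * Real.exp (-u)) k ξ hβ,
    smul_eq_mul, ← mul_assoc, mul_assoc _ β, mul_inv_cancel₀ hβ.ne', mul_one, inv_mul_eq_div]

theorem integrableOn_Ioi_pow_mul_gammaDensity (hα : 0 < α) (hβ : 0 < β) {k : ℝ}
    (hk : ξ ≤ k) (j : ℕ) :
    IntegrableOn (fun x => (x - ξ) ^ j * gammaDensity α β ξ x) (Ioi k) := by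
  have hlower : 0 ≤ β * (k - ξ) := mul_nonneg hβ.le (sub_nonneg.mpr hk)
  have hgamma : IntegrableOn (fun u => u ^ (α + j - 1) * Real.exp (-u)) (Ioi (β * (k - ξ))) :=
    ((Real.GammaIntegral_convergent (by positivity : 0 < α + j)).mono_set
      (Ioi_subset_Ioi hlower)).congr_fun (fun u _ => mul_comm _ _) measurableSet_Ioi
  rw [← integrableOn_Ioi_comp_mul_sub_iff _ k ξ hβ] at hgamma
  exact IntegrableOn.congr_fun (hgamma.const_mul _)
    (fun x hx => (pow_mul_gammaDensity_of_lt hβ (hk.trans_lt hx) j).symm) measurableSet_Ioi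

end GammaDensity

theorem gamma_linear_call_payoff_coefficients_general
    (α β ξ r T kbar : ℝ) (hα : 1 ≤ α) (hβ : 0 < β)
    (hk : ξ ≤ kbar)
    (v : ℝ → ℝ)
    (hv : ∀ x, v x = if ξ < x then
      β ^ α / Real.Gamma α * (x - ξ) ^ (α - 1) * Real.exp (-(β * (x - ξ)))
      else 0)
    (H : ℕ → ℝ → ℝ)
    (f : ℝ → ℝ)
    (hf : ∀ x, f x = Real.exp (-(r * T)) * max (x - kbar) 0)
    (p : (n : ℕ) → Fin (n + 2) → ℝ)
    (hp : ∀ (n : ℕ) (x : ℝ),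
      x * H n (x + ξ) + (ξ - kbar) * H n (x + ξ)
        = ∑ j : Fin (n + 2), p n j * x ^ (j : ℕ)) :
    ∀ n : ℕ,
      (∫ x : ℝ, f x * H n x * v x)
        = Real.exp (-(r * T)) * ∑ j : Fin (n + 2),
            p n j * (∫ x in Ioi (β * (kbar - ξ)),
                x ^ (α + ((j : ℕ) : ℝ) - 1) * Real.exp (-x))
              / (Real.Gamma α * β ^ (j : ℕ)) := by
  intro n
  obtain rfl : v = gammaDensity α β ξ := funext hv
  have hexpand : ∀ x, (x - kbar) * H n x * gammaDensity α β ξ x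
      = ∑ j : Fin (n + 2), p n j * ((x - ξ) ^ (j : ℕ) * gammaDensity α β ξ x) := by
    intro x
    have hpx := hp n (x - ξ)
    rw [sub_add_cancel] at hpx
    simp_rw [← mul_assoc, ← Finset.sum_mul, ← hpx]
    ring
  have hintegrable (j : Fin (n + 2)) := (integrableOn_Ioi_pow_mul_gammaDensity (α := α)
    (by linarith) hβ hk (j : ℕ)).const_mul (p n j)
  calc ∫ x, f x * H n x * gammaDensity α β ξ x
      = Real.exp (-(r * T)) * ∫ x in Ioi kbar, (x - kbar) * H n x * gammaDensity α β ξ x := by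
        simp_rw [hf, mul_assoc, integral_const_mul, integral_max_sub_zero_mul]
    _ = Real.exp (-(r * T)) * ∑ j : Fin (n + 2),
          p n j * ∫ x in Ioi kbar, (x - ξ) ^ (j : ℕ) * gammaDensity α β ξ x := by
        simp_rw [hexpand, integral_finsetSum _ fun j _ => hintegrable j, integral_const_mul]
    _ = _ := by
        simp_rw [integral_Ioi_pow_mul_gammaDensity hβ hk, mul_div_assoc]

/-- Payoff coefficients of the payoff `f(x) = e^{−rT}(x − k̄)⁺`
under the Gamma density on `(ξ,∞)` with shape `α ≥ 1` and rate `β > 0`, with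
orthonormal basis `H_n(x) = √(n!/Γ(α+n)) L_n^{α−1}(β(x−ξ))`: writing
`x·H_n(x+ξ) + (ξ−k̄)·H_n(x+ξ) = ∑_{j=0}^{n+1} p_{n,1+j} x^j`, one has
`f_n = e^{−rT} ∑_{j=0}^{n+1} p_{n,1+j} Γ(α+j, β(k̄−ξ)) / (Γ(α) β^j)`,
where `Γ(a,z) = ∫_z^∞ x^{a−1} e^{−x} dx`. -/
theorem gamma_linear_call_payoff_coefficients
    (α β ξ r T kbar : ℝ) (hα : 1 ≤ α) (hβ : 0 < β) (hT : 0 < T)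
    (hk : ξ ≤ kbar)
    (v : ℝ → ℝ)
    (hv : ∀ x, v x = if ξ < x then
      β ^ α / Real.Gamma α * (x - ξ) ^ (α - 1) * Real.exp (-(β * (x - ξ)))
      else 0)
    (H : ℕ → ℝ → ℝ)
    (hH : ∀ n x, H n x = Real.sqrt ((n.factorial : ℝ) / Real.Gamma (α + n))
      * (genLaguerre (α - 1) n).eval (β * (x - ξ)))
    (f : ℝ → ℝ)
    (hf : ∀ x, f x = Real.exp (-(r * T)) * max (x - kbar) 0)
    (p : (n : ℕ) → Fin (n + 2) → ℝ)
    (hp : ∀ (n : ℕ) (x : ℝ),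
      x * H n (x + ξ) + (ξ - kbar) * H n (x + ξ)
        = ∑ j : Fin (n + 2), p n j * x ^ (j : ℕ)) :
    ∀ n : ℕ,
      (∫ x : ℝ, f x * H n x * v x)
        = Real.exp (-(r * T)) * ∑ j : Fin (n + 2),
            p n j * (∫ x in Ioi (β * (kbar - ξ)),
                x ^ (α + ((j : ℕ) : ℝ) - 1) * Real.exp (-x))
              / (Real.Gamma α * β ^ (j : ℕ)) :=
  gamma_linear_call_payoff_coefficients_general α β ξ r T kbar hα hβ hk v hv H f hf p hp
end

section
/- Let (Ω, F, P) be a probability space carrying real random variables M and C with |M| ≤ K₁ almost surely, 0 < C ≤ K₂ almost surely, and E[C^{−1/2}] < ∞, for constants K₁, K₂ > 0. Define the probability density g(x) = E[ (2πC)^{−1/2} exp(−(x − M)²/(2C)) ] on ℝ, and let w(x) = Σ_{k=1}^K c_k (2πσ_k²)^{−1/2} exp(−(x − μ_k)²/(2σ_k²)) be a Gaussian mixture density with weights c_k > 0 summing to 1, means μ_k ∈ ℝ, and variances σ_k² > 0. If σ_k² > K₂/2 for some k ∈ {1,…,K}, then the likelihood ratio ℓ = g/w belongs to L²_w, i.e.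 ∫_ℝ g(x)²/w(x) dx < ∞. -/
open MeasureTheory Real

/-! Every Gaussian averaged in `g` has mean in `[-K₁, K₁]` and variance at most `K₂`, so
`g(x) ≲ exp(-x²/(2K₂) + (K₁/K₂)|x|)`; and `w` dominates its component of variance `σ²`, so
`1/w(x) ≲ exp((x-μ)²/(2σ²))`. Hence `g²/w ≲ exp(-(1/K₂ - 1/(2σ²))x² + b|x|)`, and the leading
coefficient is negative precisely because `σ² > K₂/2`. -/

noncomputable def gaussDensity (m v x : ℝ) : ℝ :=
  (2 * π * v) ^ (-(1 : ℝ) / 2) * exp (-((x - m) ^ 2 / (2 * v)))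

lemma gaussDensity_nonneg (m : ℝ) {v : ℝ} (hv : 0 ≤ v) (x : ℝ) : 0 ≤ gaussDensity m v x := by
  unfold gaussDensity; positivity

lemma integrable_exp_neg_mul_sq_add_mul_abs {a : ℝ} (ha : 0 < a) (b : ℝ) :
    Integrable fun x : ℝ => exp (-a * x ^ 2 + b * |x|) := by
  refine ((integrable_exp_neg_mul_sq (half_pos ha)).const_mul (exp (b ^ 2 / (2 * a)))).mono'
    (by fun_prop) (ae_of_all _ fun x => ?_)
  have hsq : b * |x| ≤ a / 2 * x ^ 2 + b ^ 2 / (2 * a) := by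
    have e : a / 2 * x ^ 2 + b ^ 2 / (2 * a) - b * |x| = (a * |x| - b) ^ 2 / (2 * a) := by
      rw [← sq_abs x]; field_simp; ring
    rw [← sub_nonneg, e]
    positivity
  rw [norm_of_nonneg (exp_pos _).le, ← exp_add]
  exact exp_le_exp.2 (by linarith)

lemma exp_neg_sq_div_le {x m v K₁ K₂ : ℝ} (hm : |m| ≤ K₁) (hv : 0 < v) (hvK : v ≤ K₂) :
    exp (-((x - m) ^ 2 / (2 * v))) ≤ exp (-(2 * K₂)⁻¹ * x ^ 2 + K₁ / K₂ * |x|) := by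
  have hK₂ : 0 < K₂ := hv.trans_le hvK
  have hsq : x ^ 2 - 2 * K₁ * |x| ≤ (x - m) ^ 2 := by
    have : x * m ≤ K₁ * |x| := calc
      x * m ≤ |x| * |m| := (le_abs_self _).trans (abs_mul x m).le
      _ ≤ K₁ * |x| := by rw [mul_comm]; gcongr
    nlinarith [sq_nonneg m]
  refine exp_le_exp.2 ?_
  calc -((x - m) ^ 2 / (2 * v)) ≤ -((x - m) ^ 2 / (2 * K₂)) := by gcongr
    _ ≤ -((x ^ 2 - 2 * K₁ * |x|) / (2 * K₂)) := by gcongr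
    _ = -(2 * K₂)⁻¹ * x ^ 2 + K₁ / K₂ * |x| := by field_simp; ring

lemma gaussDensity_le {x m v K₁ K₂ : ℝ} (hm : |m| ≤ K₁) (hv : 0 < v) (hvK : v ≤ K₂) :
    gaussDensity m v x ≤
      (2 * π) ^ (-(1 : ℝ) / 2) * v ^ (-(1 : ℝ) / 2)
        * exp (-(2 * K₂)⁻¹ * x ^ 2 + K₁ / K₂ * |x|) := by
  rw [gaussDensity, mul_rpow (by positivity) hv.le]
  exact mul_le_mul_of_nonneg_left (exp_neg_sq_div_le hm hv hvK) (by positivity)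

section Mixture

variable {Ω : Type*} [MeasurableSpace Ω] {P : Measure Ω} {M C : Ω → ℝ}

lemma integral_gaussDensity_nonneg (hC : ∀ᵐ ω ∂P, 0 < C ω) (x : ℝ) :
    0 ≤ ∫ ω, gaussDensity (M ω) (C ω) x ∂P :=
  integral_nonneg_of_ae <| hC.mono fun _ hω => gaussDensity_nonneg _ hω.le _

lemma integral_gaussDensity_le {K₁ K₂ : ℝ} (hM : ∀ᵐ ω ∂P, |M ω| ≤ K₁)
    (hC : ∀ᵐ ω ∂P, 0 < C ω ∧ C ω ≤ K₂)
    (hCint : Integrable (fun ω => C ω ^ (-(1 : ℝ) / 2)) P) (x : ℝ) :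
    ∫ ω, gaussDensity (M ω) (C ω) x ∂P ≤
      ((2 * π) ^ (-(1 : ℝ) / 2) * ∫ ω, C ω ^ (-(1 : ℝ) / 2) ∂P)
        * exp (-(2 * K₂)⁻¹ * x ^ 2 + K₁ / K₂ * |x|) := by
  rw [← integral_const_mul, ← integral_mul_const]
  refine integral_mono_of_nonneg (hC.mono fun _ hω => gaussDensity_nonneg _ hω.1.le _)
    ((hCint.const_mul _).mul_const _) ?_
  filter_upwards [hM, hC] with ω hMω hCω
  exact gaussDensity_le hMω hCω.1 hCω.2

lemma measurable_integral_gaussDensity [SFinite P] (hM : Measurable M) (hC : Measurable C) :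
    Measurable fun x => ∫ ω, gaussDensity (M ω) (C ω) x ∂P :=
  (StronglyMeasurable.integral_prod_right'
    (f := fun p : ℝ × Ω => gaussDensity (M p.2) (C p.2) p.1)
    (by unfold gaussDensity; fun_prop)).measurable

end Mixture

lemma exp_sq_div_exp_le (a b μ : ℝ) {s : ℝ} (hs : 0 < s) (x : ℝ) :
    exp (-a * x ^ 2 + b * |x|) ^ 2 / exp (-((x - μ) ^ 2 / (2 * s))) ≤
      exp (μ ^ 2 / (2 * s))
        * exp (-(2 * a - (2 * s)⁻¹) * x ^ 2 + (2 * b + |μ| / s) * |x|) := by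
  have hsq : (x - μ) ^ 2 ≤ x ^ 2 + 2 * |μ| * |x| + μ ^ 2 := by
    nlinarith [neg_le_abs (x * μ), abs_mul x μ]
  rw [← exp_nat_mul, ← exp_sub, ← exp_add, exp_le_exp]
  have hdiv : (x - μ) ^ 2 / (2 * s) ≤ (x ^ 2 + 2 * |μ| * |x| + μ ^ 2) / (2 * s) := by gcongr
  have e : (x ^ 2 + 2 * |μ| * |x| + μ ^ 2) / (2 * s)
      = (2 * s)⁻¹ * x ^ 2 + |μ| / s * |x| + μ ^ 2 / (2 * s) := by field_simp
  push_cast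
  linarith

lemma integrable_sq_div_of_le_of_le {f h : ℝ → ℝ} (hf : Measurable f) (hh : Measurable h)
    {A a b B μ s : ℝ} (hs : 0 < s) (has : (2 * s)⁻¹ < 2 * a) (hB : 0 < B)
    (hf0 : ∀ x, 0 ≤ f x) (hfle : ∀ x, f x ≤ A * exp (-a * x ^ 2 + b * |x|))
    (hhge : ∀ x, B * exp (-((x - μ) ^ 2 / (2 * s))) ≤ h x) :
    Integrable fun x => f x ^ 2 / h x := by
  refine ((integrable_exp_neg_mul_sq_add_mul_abs (sub_pos.2 has) (2 * b + |μ| / s)).const_mul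
    (A ^ 2 / B * exp (μ ^ 2 / (2 * s)))).mono'
    ((hf.pow_const 2).div hh).aestronglyMeasurable (ae_of_all _ fun x => ?_)
  have hh0 : 0 < h x := (mul_pos hB (exp_pos _)).trans_le (hhge x)
  rw [norm_of_nonneg (div_nonneg (sq_nonneg _) hh0.le)]
  calc f x ^ 2 / h x
      ≤ (A * exp (-a * x ^ 2 + b * |x|)) ^ 2 / (B * exp (-((x - μ) ^ 2 / (2 * s)))) := by
        refine div_le_div₀ (by positivity) ?_ (by positivity) (hhge x)
        exact pow_le_pow_left₀ (hf0 x) (hfle x) 2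
    _ = A ^ 2 / B * (exp (-a * x ^ 2 + b * |x|) ^ 2 / exp (-((x - μ) ^ 2 / (2 * s)))) := by
        field_simp
    _ ≤ _ := by
        rw [mul_assoc]
        gcongr
        exact exp_sq_div_exp_le a b μ hs x

theorem likelihood_ratio_in_L2_general
    {Ω : Type*} [MeasurableSpace Ω] (P : Measure Ω) [IsProbabilityMeasure P]
    (M C : Ω → ℝ) (hM_meas : Measurable M) (hC_meas : Measurable C)
    (K₁ K₂ : ℝ) (hK₂ : 0 < K₂)
    (hM : ∀ᵐ ω ∂P, |M ω| ≤ K₁)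
    (hC : ∀ᵐ ω ∂P, 0 < C ω ∧ C ω ≤ K₂)
    (hCint : Integrable (fun ω => (C ω) ^ (-(1 : ℝ) / 2)) P)
    (g : ℝ → ℝ)
    (hg : ∀ x, g x = ∫ ω, (2 * π * C ω) ^ (-(1 : ℝ) / 2)
      * Real.exp (-((x - M ω) ^ 2 / (2 * C ω))) ∂P)
    (K : ℕ)
    (c μk σ : Fin K → ℝ)
    (hc_pos : ∀ k, 0 < c k)
    (w : ℝ → ℝ)
    (hw : ∀ x, w x = ∑ k, c k * ((2 * π * (σ k) ^ 2) ^ (-(1 : ℝ) / 2)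
      * Real.exp (-((x - μk k) ^ 2 / (2 * (σ k) ^ 2)))))
    (hvar : ∃ k, K₂ / 2 < (σ k) ^ 2) :
    Integrable (fun x : ℝ => g x ^ 2 / w x) := by
  obtain ⟨k₀, hk₀⟩ := hvar
  obtain rfl : g = fun x => ∫ ω, gaussDensity (M ω) (C ω) x ∂P := funext hg
  obtain rfl : w = fun x => ∑ k, c k * gaussDensity (μk k) (σ k ^ 2) x := funext hw
  have hs : 0 < σ k₀ ^ 2 := by linarith
  refine integrable_sq_div_of_le_of_le (μ := μk k₀) (s := σ k₀ ^ 2)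
    (B := c k₀ * (2 * π * σ k₀ ^ 2) ^ (-(1 : ℝ) / 2))
    (measurable_integral_gaussDensity hM_meas hC_meas) (by unfold gaussDensity; fun_prop)
    hs ?_ (by have := hc_pos k₀; positivity)
    (integral_gaussDensity_nonneg (hC.mono fun _ h => h.1))
    (integral_gaussDensity_le hM hC hCint) (fun x => ?_)
  · rw [show 2 * (2 * K₂)⁻¹ = K₂⁻¹ by field_simp]
    exact inv_strictAnti₀ hK₂ (by linarith)
  · rw [mul_assoc]
    exact Finset.single_le_sum (f := fun k => c k * gaussDensity (μk k) (σ k ^ 2) x)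
      (fun k _ => mul_nonneg (hc_pos k).le (gaussDensity_nonneg _ (sq_nonneg _) x))
      (Finset.mem_univ k₀)

/-- If the log-price density is the Gaussian mixture
`g(x) = E[(2πC)^{−1/2} exp(−(x−M)²/(2C))]` with `|M| ≤ K₁` a.s.,
`0 < C ≤ K₂` a.s. and `E[C^{−1/2}] < ∞`, and `w` is a finite Gaussian mixture
density one of whose components has variance `σ_k² > K₂/2`, then the likelihood
ratio `ℓ = g/w` belongs to `L²_w`, i.e. `∫ g²/w < ∞`. -/
theorem likelihood_ratio_in_L2
    {Ω : Type*} [MeasurableSpace Ω] (P : Measure Ω) [IsProbabilityMeasure P]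
    (M C : Ω → ℝ) (hM_meas : Measurable M) (hC_meas : Measurable C)
    (K₁ K₂ : ℝ) (hK₁ : 0 < K₁) (hK₂ : 0 < K₂)
    (hM : ∀ᵐ ω ∂P, |M ω| ≤ K₁)
    (hC : ∀ᵐ ω ∂P, 0 < C ω ∧ C ω ≤ K₂)
    (hCint : Integrable (fun ω => (C ω) ^ (-(1 : ℝ) / 2)) P)
    (g : ℝ → ℝ)
    (hg : ∀ x, g x = ∫ ω, (2 * π * C ω) ^ (-(1 : ℝ) / 2)
      * Real.exp (-((x - M ω) ^ 2 / (2 * C ω))) ∂P)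
    (K : ℕ) (hK : 0 < K)
    (c μk σ : Fin K → ℝ)
    (hc_pos : ∀ k, 0 < c k) (hc_sum : ∑ k, c k = 1)
    (hσ_pos : ∀ k, 0 < σ k)
    (w : ℝ → ℝ)
    (hw : ∀ x, w x = ∑ k, c k * ((2 * π * (σ k) ^ 2) ^ (-(1 : ℝ) / 2)
      * Real.exp (-((x - μk k) ^ 2 / (2 * (σ k) ^ 2)))))
    (hvar : ∃ k, K₂ / 2 < (σ k) ^ 2) :
    Integrable (fun x : ℝ => g x ^ 2 / w x) :=
  likelihood_ratio_in_L2_general P M C hM_meas hC_meas K₁ K₂ hK₂ hM hC hCint g hg K c μk σ hc_pos w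
    hw hvar
end
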